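/- Progress for the ELEVATE core calculus: if Δ;· ⊢ e : t (e is closed and well-typed), then either e is a value, or there exist an evaluation context E and terms e', e'' such that e = E[e'] and e' ⇝ e'' (equivalently, there exists ê with e ↣ ê). -/

import Mathlib

namespace Elevate

/-! ### Types and rows (merged; separated by kinds) -/

inductive Ty : Type
  | tvar : String → Ty
  | arrow : Ty → Ty → Ty
  | record : Ty → Ty
  | variant : Ty → Ty
  | recT : String → Ty → Ty       -- α as τ
  | rempty : Ty                   -- empty row ·
  | rcons : String → Ty → Ty → Ty -- (l : t | ρ)

/-- Contractive types: type constructor applications. -/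
def Ty.Contractive : Ty → Prop
  | .arrow _ _ => True
  | .record _ => True
  | .variant _ => True
  | _ => False

/-- Free type variables. -/
def Ty.ftv : Ty → Finset String
  | .tvar α => {α}
  | .arrow t1 t2 => t1.ftv ∪ t2.ftv
  | .record ρ => ρ.ftv
  | .variant ρ => ρ.ftv
  | .recT α τ => τ.ftv.erase α
  | .rempty => ∅
  | .rcons _ t ρ => t.ftv ∪ ρ.ftv

/-- Substitution of a single type variable. -/
def Ty.subst (α : String) (s : Ty) : Ty → Ty
  | .tvar β => if β = α then s else .tvar β
  | .arrow t1 t2 => .arrow (Ty.subst α s t1) (Ty.subst α s t2)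
  | .record ρ => .record (Ty.subst α s ρ)
  | .variant ρ => .variant (Ty.subst α s ρ)
  | .recT β τ => if β = α then .recT β τ else .recT β (Ty.subst α s τ)
  | .rempty => .rempty
  | .rcons l t ρ => .rcons l (Ty.subst α s t) (Ty.subst α s ρ)

/-- Simultaneous substitution given by an association list. -/
def Ty.substMap (S : List (String × Ty)) : Ty → Ty
  | .tvar β => (List.lookup β S).getD (.tvar β)
  | .arrow t1 t2 => .arrow (Ty.substMap S t1) (Ty.substMap S t2)
  | .record ρ => .record (Ty.substMap S ρ)
  | .variant ρ => .variant (Ty.substMap S ρ)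
  | .recT β τ => .recT β (Ty.substMap (S.filter (fun p => p.1 ≠ β)) τ)
  | .rempty => .rempty
  | .rcons l t ρ => .rcons l (Ty.substMap S t) (Ty.substMap S ρ)

/-! ### Kinds -/

/-- Row kinds: positive (finite) or negative (cofinite) sets of labels
    that can appear in a row. -/
inductive RowKind : Type
  | pos : Finset String → RowKind
  | neg : Finset String → RowKind

inductive Kind : Type
  | type : Kind
  | row : RowKind → Kind

/-- The row kind subset relation ⊑. -/
def RowKind.Sub : RowKind → RowKind → Prop
  | .pos L1, .pos L2 => L1 ⊆ L2
  | .neg L1, .neg L2 => L2 ⊆ L1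
  | .pos L1, .neg L2 => L1 ∩ L2 = ∅
  | .neg _, .pos _ => False

/-- The row kind extension operator `R + l`. -/
def RowKind.ext : RowKind → String → Option RowKind
  | .pos L, l => if l ∈ L then none else some (.pos (insert l L))
  | .neg L, l => if l ∈ L then some (.neg (L.erase l)) else none

/-- Kinding environments. -/
abbrev KEnv := List (String × Kind)

/-- Kinding judgment Δ ⊢ t : κ (also well-formedness of types and rows). -/
inductive HasKind : KEnv → Ty → Kind → Prop
  | tvar {Δ : KEnv} {α : String} {κ : Kind} :
      List.lookup α Δ = some κ → HasKind Δ (.tvar α) κ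
  | arrow {Δ t1 t2} :
      HasKind Δ t1 .type → HasKind Δ t2 .type → HasKind Δ (.arrow t1 t2) .type
  | record {Δ ρ R} :
      HasKind Δ ρ (.row R) → HasKind Δ (.record ρ) .type
  | variant {Δ ρ R} :
      HasKind Δ ρ (.row R) → HasKind Δ (.variant ρ) .type
  | recT {Δ α τ} :
      Ty.Contractive τ → HasKind ((α, .type) :: Δ) τ .type →
      HasKind Δ (.recT α τ) .type
  | rempty {Δ} : HasKind Δ .rempty (.row (.pos ∅))
  | rcons {Δ ρ R l t R'} :
      HasKind Δ ρ (.row R) → HasKind Δ t .type → RowKind.ext R l = some R' →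
      HasKind Δ (.rcons l t ρ) (.row R')

/-! ### Type schemes -/

inductive Scheme : Type
  | mono : Ty → Scheme
  | all : String → Kind → Scheme → Scheme

def Scheme.ftv : Scheme → Finset String
  | .mono t => t.ftv
  | .all α _ σ => σ.ftv.erase α

def Scheme.subst (α : String) (s : Ty) : Scheme → Scheme
  | .mono t => .mono (Ty.subst α s t)
  | .all β κ σ => if β = α then .all β κ σ else .all β κ (Scheme.subst α s σ)

def Scheme.substMap (S : List (String × Ty)) : Scheme → Scheme
  | .mono t => .mono (Ty.substMap S t)
  | .all β κ σ => .all β κ (Scheme.substMap (S.filter (fun p => p.1 ≠ β)) σ)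

/-- Generalize a type over a list of kinded type variables. -/
def Scheme.close : List (String × Kind) → Ty → Scheme
  | [], t => .mono t
  | (α, κ) :: as, t => .all α κ (Scheme.close as t)

/-- Type scheme instantiation Δ ⊢ σ ⪯ σ'. -/
inductive Inst : KEnv → Scheme → Scheme → Prop
  | refl {Δ σ} : Inst Δ σ σ
  | instType {Δ t α σ} :
      HasKind Δ t .type → α ∉ t.ftv →
      Inst Δ (.all α .type σ) (σ.subst α t)
  | instRow {Δ ρ R' R α σ} :
      HasKind Δ ρ (.row R') → RowKind.Sub R' R → α ∉ ρ.ftv →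
      Inst Δ (.all α (.row R) σ) (σ.subst α ρ)
  | trans {Δ σ0 σ1 σ2} :
      Inst Δ σ0 σ1 → Inst Δ σ1 σ2 → Inst Δ σ0 σ2

/-- Well-formedness of a scheme w.r.t. a kinding environment. -/
inductive SchemeWF : KEnv → Scheme → Prop
  | mono {Δ t} : HasKind Δ t .type → SchemeWF Δ (.mono t)
  | all {Δ α κ σ} : SchemeWF ((α, κ) :: Δ) σ → SchemeWF Δ (.all α κ σ)

/-! ### Terms -/

mutual
inductive Tm : Type
  | var : String → Tm
  | app : Tm → Tm → Tm
  | lam : String → Tm → Tm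
  | letE : String → Tm → Tm → Tm
  | fix : Tm
  | label : String → Tm → Tm            -- variant injection l e
  | record : Fields → Tm                -- record constructor
  | proj : Tm → String → Tm             -- e.l
  | remove : Tm → String → Tm           -- e.-l
  | modify : Tm → Fields → Tm           -- e.{…}
  | extend : Tm → Fields → Tm           -- e.+{…}
  | matchVoid : Tm → Tm                 -- match e with ⟨⟩
  | matchUnit : Tm → Tm → Tm            -- match e with ⟨{·} ⇒ e1⟩
  | matchVar : Tm → String → String → Tm → String → Tm → Tm
      -- match e with ⟨l x1 ⇒ e1 | x2 ⇒ e2⟩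
inductive Fields : Type
  | nil : Fields
  | cons : String → Tm → Fields → Fields
end

mutual
/-- Capture-avoiding substitution e[x ↦ v]. -/
def Tm.subst (x : String) (v : Tm) : Tm → Tm
  | .var y => if y = x then v else .var y
  | .app e1 e2 => .app (Tm.subst x v e1) (Tm.subst x v e2)
  | .lam y e => if y = x then .lam y e else .lam y (Tm.subst x v e)
  | .letE f e1 e2 =>
      .letE f (Tm.subst x v e1) (if f = x then e2 else Tm.subst x v e2)
  | .fix => .fix
  | .label l e => .label l (Tm.subst x v e)
  | .record fs => .record (Fields.subst x v fs)
  | .proj e l => .proj (Tm.subst x v e) l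
  | .remove e l => .remove (Tm.subst x v e) l
  | .modify e fs => .modify (Tm.subst x v e) (Fields.subst x v fs)
  | .extend e fs => .extend (Tm.subst x v e) (Fields.subst x v fs)
  | .matchVoid e => .matchVoid (Tm.subst x v e)
  | .matchUnit e e1 => .matchUnit (Tm.subst x v e) (Tm.subst x v e1)
  | .matchVar e l x1 e1 x2 e2 =>
      .matchVar (Tm.subst x v e) l
        x1 (if x1 = x then e1 else Tm.subst x v e1)
        x2 (if x2 = x then e2 else Tm.subst x v e2)
def Fields.subst (x : String) (v : Tm) : Fields → Fields
  | .nil => .nil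
  | .cons l e fs => .cons l (Tm.subst x v e) (Fields.subst x v fs)
end

mutual
/-- Free term variables. -/
def Tm.fv : Tm → Finset String
  | .var y => {y}
  | .app e1 e2 => e1.fv ∪ e2.fv
  | .lam y e => e.fv.erase y
  | .letE f e1 e2 => e1.fv ∪ e2.fv.erase f
  | .fix => ∅
  | .label _ e => e.fv
  | .record fs => Fields.fv fs
  | .proj e _ => e.fv
  | .remove e _ => e.fv
  | .modify e fs => e.fv ∪ Fields.fv fs
  | .extend e fs => e.fv ∪ Fields.fv fs
  | .matchVoid e => e.fv
  | .matchUnit e e1 => e.fv ∪ e1.fv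
  | .matchVar e _ x1 e1 x2 e2 => e.fv ∪ e1.fv.erase x1 ∪ e2.fv.erase x2
def Fields.fv : Fields → Finset String
  | .nil => ∅
  | .cons _ e fs => e.fv ∪ Fields.fv fs
end

/-! ### Field operations -/

def Fields.lookup : Fields → String → Option Tm
  | .nil, _ => none
  | .cons l e fs, l' => if l = l' then some e else Fields.lookup fs l'

def Fields.labels : Fields → List String
  | .nil => []
  | .cons l _ fs => l :: Fields.labels fs

def Fields.remove : Fields → String → Fields
  | .nil, _ => .nil
  | .cons l e fs, l' =>
      if l = l' then Fields.remove fs l' else .cons l e (Fields.remove fs l')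

/-- Record modification: replace the values of the fields occurring in `fs'`. -/
def Fields.update : Fields → Fields → Fields
  | .nil, _ => .nil
  | .cons l e fs, fs' => .cons l ((Fields.lookup fs' l).getD e) (Fields.update fs fs')

def Fields.append : Fields → Fields → Fields
  | .nil, fs' => fs'
  | .cons l e fs, fs' => .cons l e (Fields.append fs fs')

def Fields.ofList : List (String × Tm) → Fields
  | [] => .nil
  | (l, e) :: fs => .cons l e (Fields.ofList fs)

/-! ### Values -/

mutual
inductive IsValue : Tm → Prop
  | label {l v} : IsValue v → IsValue (.label l v)
  | record {fs} : FieldsValues fs → IsValue (.record fs)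
  | lam {x e} : IsValue (.lam x e)
  | fix : IsValue .fix
inductive FieldsValues : Fields → Prop
  | nil : FieldsValues .nil
  | cons {l e fs} : IsValue e → FieldsValues fs → FieldsValues (.cons l e fs)
end

/-! ### Typing -/

/-- Typing environments. -/
abbrev TEnv := List (String × Scheme)

/-- Free type variables of a typing environment. -/
def ftvEnv (Γ : TEnv) : Finset String :=
  Γ.foldr (fun p acc => p.2.ftv ∪ acc) ∅

/-- Well-formedness of a typing environment w.r.t. a kinding environment. -/
def EnvWF (Δ : KEnv) (Γ : TEnv) : Prop := ∀ p ∈ Γ, SchemeWF Δ p.2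

/-- A row built from a list of label-type pairs, terminated by the empty row. -/
def Row.ofList : List (String × Ty) → Ty
  | [] => .rempty
  | (l, t) :: lts => .rcons l t (Row.ofList lts)

/-- A row built from a list of label-type pairs, terminated by the row ρ. -/
def Row.append : List (String × Ty) → Ty → Ty
  | [], ρ => ρ
  | (l, t) :: lts, ρ => .rcons l t (Row.append lts ρ)

mutual
/-- The typing judgment Δ;Γ ⊢ e : t. -/
inductive HasTy : KEnv → TEnv → Tm → Ty → Prop
  | var {Δ Γ x σ t} :
      List.lookup x Γ = some σ → Inst Δ σ (.mono t) →
      HasTy Δ Γ (.var x) t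
  | app {Δ Γ f e t1 t2} :
      HasTy Δ Γ f (.arrow t1 t2) → HasTy Δ Γ e t1 →
      HasTy Δ Γ (.app f e) t2
  | lam {Δ Γ x e t1 t2} :
      HasTy Δ ((x, .mono t1) :: Γ) e t2 →
      HasTy Δ Γ (.lam x e) (.arrow t1 t2)
  | letE {Δ Γ f e1 e2 t1 t2} {as : List (String × Kind)} :
      (as.map Prod.fst).toFinset = t1.ftv \ ftvEnv Γ →
      (as.map Prod.fst).Nodup →
      HasTy (as ++ Δ) Γ e1 t1 →
      HasTy Δ ((f, Scheme.close as t1) :: Γ) e2 t2 →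
      HasTy Δ Γ (.letE f e1 e2) t2
  | fix {Δ Γ t1 t2} :
      HasTy Δ Γ .fix (.arrow (.arrow (.arrow t1 t2) (.arrow t1 t2)) (.arrow t1 t2))
  | label {Δ Γ e t l ρ R} :
      HasTy Δ Γ e t → HasKind Δ ρ (.row R) → RowKind.Sub R (.neg {l}) →
      HasTy Δ Γ (.label l e) (.variant (.rcons l t ρ))
  | unroll {Δ Γ e α τ} :
      HasTy Δ Γ e (.recT α τ) →
      HasTy Δ Γ e (τ.subst α (.recT α τ))
  | roll {Δ Γ e α τ} :
      HasTy Δ Γ e (τ.subst α (.recT α τ)) →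
      HasTy Δ Γ e (.recT α τ)
  | recordCons {Δ Γ fs lts} :
      HasTyFields Δ Γ fs lts →
      HasTy Δ Γ (.record fs) (.record (Row.ofList lts))
  | recordMod {Δ Γ e fs lts ρ} :
      HasTy Δ Γ e (.record (Row.append lts ρ)) →
      HasTyFields Δ Γ fs lts →
      HasTy Δ Γ (.modify e fs) (.record (Row.append lts ρ))
  | recordExt {Δ Γ e fs lts ρ R} :
      HasTy Δ Γ e (.record ρ) →
      HasKind Δ ρ (.row R) →
      RowKind.Sub R (.neg (lts.map Prod.fst).toFinset) →
      HasTyFields Δ Γ fs lts →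
      HasTy Δ Γ (.extend e fs) (.record (Row.append lts ρ))
  | fieldAccess {Δ Γ e l t ρ} :
      HasTy Δ Γ e (.record (.rcons l t ρ)) →
      HasTy Δ Γ (.proj e l) t
  | fieldDel {Δ Γ e l t ρ} :
      HasTy Δ Γ e (.record (.rcons l t ρ)) →
      HasTy Δ Γ (.remove e l) (.record ρ)
  | matchVoid {Δ Γ e trhs} :
      HasTy Δ Γ e (.variant .rempty) →
      HasTy Δ Γ (.matchVoid e) trhs
  | matchUnit {Δ Γ e e1 trhs} :
      HasTy Δ Γ e (.record .rempty) → HasTy Δ Γ e1 trhs →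
      HasTy Δ Γ (.matchUnit e e1) trhs
  | matchVar {Δ Γ e l x1 e1 x2 e2 t ρ trhs} {cs : List (String × Kind)} :
      (cs.map Prod.fst).toFinset = (t.ftv ∪ (Ty.variant ρ).ftv) \ ftvEnv Γ →
      (cs.map Prod.fst).Nodup →
      HasTy (cs ++ Δ) Γ e (.variant (.rcons l t ρ)) →
      HasTy Δ ((x1, Scheme.close (cs.filter (fun p => decide (p.1 ∈ t.ftv))) t) :: Γ) e1 trhs →
      HasTy Δ ((x2, Scheme.close (cs.filter (fun p => decide (p.1 ∈ (Ty.variant ρ).ftv)))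
                      (.variant ρ)) :: Γ) e2 trhs →
      HasTy Δ Γ (.matchVar e l x1 e1 x2 e2) trhs
/-- Typing of record fields against a list of label-type pairs. -/
inductive HasTyFields : KEnv → TEnv → Fields → List (String × Ty) → Prop
  | nil {Δ Γ} : HasTyFields Δ Γ .nil []
  | cons {Δ Γ l e t fs lts} :
      HasTy Δ Γ e t → HasTyFields Δ Γ fs lts →
      HasTyFields Δ Γ (.cons l e fs) ((l, t) :: lts)
end

/-! ### Operational semantics -/

/-- The redex reduction relation e1 ⇝ e2. -/
inductive Red : Tm → Tm → Prop
  | app {x e v} : IsValue v →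
      Red (.app (.lam x e) v) (e.subst x v)
  | letE {f v e2} : IsValue v →
      Red (.letE f v e2) (e2.subst f v)
  | fix {v x} : IsValue v → x ∉ v.fv →
      Red (.app .fix v) (.app v (.lam x (.app (.app .fix v) (.var x))))
  | fieldAccess {fs l v} : FieldsValues fs → Fields.lookup fs l = some v →
      Red (.proj (.record fs) l) v
  | fieldDel {fs l v} : FieldsValues fs → Fields.lookup fs l = some v →
      Red (.remove (.record fs) l) (.record (Fields.remove fs l))
  | recordMod {fs fs'} : FieldsValues fs → FieldsValues fs' →
      (∀ l ∈ Fields.labels fs', l ∈ Fields.labels fs) →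
      Red (.modify (.record fs) fs') (.record (Fields.update fs fs'))
  | recordExt {fs fs'} : FieldsValues fs → FieldsValues fs' →
      (∀ l ∈ Fields.labels fs', l ∉ Fields.labels fs) →
      Red (.extend (.record fs) fs') (.record (Fields.append fs fs'))
  | matchUnit {e} :
      Red (.matchUnit (.record .nil) e) e
  | matchMatch {l v x1 e1 x2 e2} : IsValue v →
      Red (.matchVar (.label l v) l x1 e1 x2 e2) (e1.subst x1 v)
  | matchSkip {l l' v x1 e1 x2 e2} : IsValue v → l ≠ l' →
      Red (.matchVar (.label l v) l' x1 e1 x2 e2) (e2.subst x2 (.label l v))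

/-- Evaluation contexts (left-to-right, call-by-value). -/
inductive Ctx : Type
  | hole : Ctx
  | appL : Ctx → Tm → Ctx
  | appR : (v : Tm) → IsValue v → Ctx → Ctx
  | letE : String → Ctx → Tm → Ctx
  | label : String → Ctx → Ctx
  | record : (pre : Fields) → FieldsValues pre → String → Ctx → Fields → Ctx
  | proj : Ctx → String → Ctx
  | remove : Ctx → String → Ctx
  | modifyL : Ctx → Fields → Ctx
  | extendL : Ctx → Fields → Ctx
  | modifyR : (v : Tm) → IsValue v → (pre : Fields) → FieldsValues pre →
      String → Ctx → Fields → Ctx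
  | extendR : (v : Tm) → IsValue v → (pre : Fields) → FieldsValues pre →
      String → Ctx → Fields → Ctx
  | matchVoid : Ctx → Ctx
  | matchUnit : Ctx → Tm → Ctx
  | matchVar : Ctx → String → String → Tm → String → Tm → Ctx

/-- Plugging a term into an evaluation context: E[e]. -/
def Ctx.fill : Ctx → Tm → Tm
  | .hole, e => e
  | .appL E e2, e => .app (E.fill e) e2
  | .appR v _ E, e => .app v (E.fill e)
  | .letE f E e2, e => .letE f (E.fill e) e2
  | .label l E, e => .label l (E.fill e)
  | .record pre _ l E post, e => .record (Fields.append pre (.cons l (E.fill e) post))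
  | .proj E l, e => .proj (E.fill e) l
  | .remove E l, e => .remove (E.fill e) l
  | .modifyL E fs, e => .modify (E.fill e) fs
  | .extendL E fs, e => .extend (E.fill e) fs
  | .modifyR v _ pre _ l E post, e =>
      .modify v (Fields.append pre (.cons l (E.fill e) post))
  | .extendR v _ pre _ l E post, e =>
      .extend v (Fields.append pre (.cons l (E.fill e) post))
  | .matchVoid E, e => .matchVoid (E.fill e)
  | .matchUnit E e1, e => .matchUnit (E.fill e) e1
  | .matchVar E l x1 e1 x2 e2, e => .matchVar (E.fill e) l x1 e1 x2 e2

/-- The contextual step relation e1 ↣ e2 : E[e'] ↣ E[e''] iff e' ⇝ e''. -/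
def SStep (e1 e2 : Tm) : Prop :=
  ∃ (E : Ctx) (e' e'' : Tm), e1 = E.fill e' ∧ e2 = E.fill e'' ∧ Red e' e''

/-- Application of a type substitution to a typing environment. -/
def substEnv (S : List (String × Ty)) (Γ : TEnv) : TEnv :=
  Γ.map (fun p => (p.1, p.2.substMap S))

end Elevate

/-! A closed well-typed term is a value or contains a redex in evaluation position: induction on
the typing derivation, using canonical forms for the values met in elimination position. Since
types are equi-recursive, canonical forms are proved for every unrolling of the type, which is
what makes T-Roll and T-Unroll go through. Record redexes need, in addition, that the labels of a
record value are exactly those of its row type and, for extension, that a well-kinded row only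
carries labels allowed by its kind. -/

namespace Elevate

def RowKind.Mem : RowKind → String → Prop
  | .pos L, l => l ∈ L
  | .neg L, l => l ∉ L

theorem RowKind.Mem.of_sub {R R' : RowKind} {l : String} (hR : R.Sub R') (hl : R.Mem l) :
    R'.Mem l := by
  cases R <;> cases R' <;> simp only [RowKind.Sub, RowKind.Mem] at hR hl ⊢
  · exact hR hl
  · exact fun hl' => by simpa [hR] using Finset.mem_inter.2 ⟨hl, hl'⟩
  · exact fun hl' => hl (hR hl')

theorem RowKind.mem_of_ext_eq_some {R R' : RowKind} {l : String} (h : R.ext l = some R') :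
    R'.Mem l := by
  cases R <;> simp only [RowKind.ext] at h <;> split_ifs at h <;> cases h <;> simp [RowKind.Mem]

theorem RowKind.Mem.of_ext_eq_some {R R' : RowKind} {l l' : String} (h : R.ext l = some R')
    (hl' : R.Mem l') : R'.Mem l' := by
  cases R <;> simp only [RowKind.ext] at h <;> split_ifs at h <;> cases h <;>
    simp_all [RowKind.Mem]

def Ty.rowLabels : Ty → List String
  | .rcons l _ ρ => l :: rowLabels ρ
  | _ => []

@[simp]
theorem Ty.rowLabels_rcons (l : String) (t ρ : Ty) :
    (Ty.rcons l t ρ).rowLabels = l :: ρ.rowLabels := rfl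

@[simp]
theorem Ty.rowLabels_rempty : Ty.rempty.rowLabels = [] := rfl

@[simp]
theorem Row.rowLabels_ofList (lts : List (String × Ty)) :
    (Row.ofList lts).rowLabels = lts.map Prod.fst := by
  induction lts with
  | nil => rfl
  | cons p lts ih => simp [Row.ofList, ih]

@[simp]
theorem Row.rowLabels_append (lts : List (String × Ty)) (ρ : Ty) :
    (Row.append lts ρ).rowLabels = lts.map Prod.fst ++ ρ.rowLabels := by
  induction lts with
  | nil => rfl
  | cons p lts ih => simp [Row.append, ih]

theorem HasKind.mem_of_mem_rowLabels {Δ : KEnv} {ρ : Ty} {R : RowKind}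
    (h : HasKind Δ ρ (.row R)) {l : String} (hl : l ∈ ρ.rowLabels) : R.Mem l := by
  induction ρ generalizing R with
  | rcons l' t ρ _ ihρ =>
    cases h with
    | rcons hρ _ hext =>
      rcases List.mem_cons.1 hl with rfl | hl
      · exact RowKind.mem_of_ext_eq_some hext
      · exact (ihρ hρ hl).of_ext_eq_some hext
  | _ => simp [Ty.rowLabels] at hl

theorem HasTyFields.labels_eq {Δ : KEnv} {Γ : TEnv} :
    ∀ {fs : Fields} {lts : List (String × Ty)}, HasTyFields Δ Γ fs lts →
      fs.labels = lts.map Prod.fst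
  | _, _, .nil => rfl
  | _, _, .cons _ hfs => by simp [Fields.labels, hfs.labels_eq]

theorem Fields.exists_lookup_of_mem_labels {l : String} :
    ∀ {fs : Fields}, l ∈ fs.labels → ∃ e, fs.lookup l = some e
  | .nil, hl => by simp [Fields.labels] at hl
  | .cons l' e fs, hl => by
    by_cases hl' : l' = l
    · exact ⟨e, by simp [Fields.lookup, hl']⟩
    · simpa [Fields.lookup, hl'] using
        exists_lookup_of_mem_labels (fs := fs) (by simpa [Fields.labels, Ne.symm hl'] using hl)

theorem Fields.eq_nil_of_labels_eq_nil {fs : Fields} (h : fs.labels = []) : fs = .nil := by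
  cases fs with
  | nil => rfl
  | cons => simp [Fields.labels] at h

inductive Ty.Unroll : Ty → Ty → Prop
  | mk (α : String) (τ : Ty) : Ty.Unroll (.recT α τ) (τ.subst α (.recT α τ))

theorem Ty.eq_of_unroll_of_contractive {t t' : Ty} (h : Relation.ReflTransGen Ty.Unroll t t')
    (ht : t.Contractive) : t' = t := by
  rcases Relation.ReflTransGen.cases_head h with rfl | ⟨_, hu, _⟩
  · rfl
  · cases hu
    exact ht.elim

def CanonicalForm (v : Tm) : Ty → Prop
  | .arrow _ _ => (∃ x e, v = .lam x e) ∨ v = .fix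
  | .variant ρ => ∃ l w, v = .label l w ∧ IsValue w ∧ l ∈ ρ.rowLabels
  | .record ρ => ∃ fs, v = .record fs ∧ FieldsValues fs ∧ fs.labels = ρ.rowLabels
  | _ => True

theorem HasTy.canonicalForm_of_unroll {Δ : KEnv} {Γ : TEnv} {v : Tm} {t : Ty}
    (h : HasTy Δ Γ v t) (hv : IsValue v) {t' : Ty} (ht' : Relation.ReflTransGen Ty.Unroll t t') :
    CanonicalForm v t' := by
  induction h using HasTy.rec (motive_2 := fun _ _ _ _ _ => True) generalizing t' with
  | lam =>
    rw [Ty.eq_of_unroll_of_contractive ht' trivial]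
    exact .inl ⟨_, _, rfl⟩
  | fix =>
    rw [Ty.eq_of_unroll_of_contractive ht' trivial]
    exact .inr rfl
  | @label _ _ _ _ l =>
    rw [Ty.eq_of_unroll_of_contractive ht' trivial]
    cases hv with
    | label hw => exact ⟨l, _, rfl, hw, List.mem_cons_self⟩
  | @recordCons _ _ _ _ hfs =>
    rw [Ty.eq_of_unroll_of_contractive ht' trivial]
    cases hv with
    | record hvs => exact ⟨_, rfl, hvs, by simp [hfs.labels_eq]⟩
  | @unroll _ _ _ α τ _ ih => exact ih hv (.head (.mk α τ) ht')
  | roll _ ih =>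
    rcases Relation.ReflTransGen.cases_head ht' with rfl | ⟨_, hu, ht'⟩
    · trivial
    · cases hu
      exact ih hv ht'
  | nil => trivial
  | cons => trivial
  | _ => cases hv

theorem HasTy.canonicalForm {Δ : KEnv} {Γ : TEnv} {v : Tm} {t : Ty} (h : HasTy Δ Γ v t)
    (hv : IsValue v) : CanonicalForm v t :=
  h.canonicalForm_of_unroll hv .refl

section Redexes

variable {Δ : KEnv} {Γ : TEnv}

theorem HasTy.exists_red_app {f a : Tm} {t1 t2 : Ty} (hf : HasTy Δ Γ f (.arrow t1 t2))
    (hvf : IsValue f) (hva : IsValue a) : ∃ e', Red (.app f a) e' := by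
  rcases hf.canonicalForm hvf with ⟨x, b, rfl⟩ | rfl
  · exact ⟨_, .app hva⟩
  · obtain ⟨x, hx⟩ := Infinite.exists_notMem_finset a.fv
    exact ⟨_, .fix hva hx⟩

theorem HasTy.exists_record_lookup {e : Tm} {l : String} {t ρ : Ty}
    (he : HasTy Δ Γ e (.record (.rcons l t ρ))) (hv : IsValue e) :
    ∃ fs w, e = .record fs ∧ FieldsValues fs ∧ fs.lookup l = some w := by
  obtain ⟨fs, rfl, hvs, hlabels⟩ := he.canonicalForm hv
  obtain ⟨w, hw⟩ := Fields.exists_lookup_of_mem_labels (l := l) (by rw [hlabels]; simp)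
  exact ⟨fs, w, rfl, hvs, hw⟩

theorem HasTy.exists_red_proj {e : Tm} {l : String} {t ρ : Ty}
    (he : HasTy Δ Γ e (.record (.rcons l t ρ))) (hv : IsValue e) :
    ∃ e', Red (.proj e l) e' := by
  obtain ⟨_, _, rfl, hvs, hw⟩ := he.exists_record_lookup hv
  exact ⟨_, .fieldAccess hvs hw⟩

theorem HasTy.exists_red_remove {e : Tm} {l : String} {t ρ : Ty}
    (he : HasTy Δ Γ e (.record (.rcons l t ρ))) (hv : IsValue e) :
    ∃ e', Red (.remove e l) e' := by
  obtain ⟨_, _, rfl, hvs, hw⟩ := he.exists_record_lookup hv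
  exact ⟨_, .fieldDel hvs hw⟩

theorem HasTy.exists_red_modify {e : Tm} {fs : Fields} {lts : List (String × Ty)} {ρ : Ty}
    (he : HasTy Δ Γ e (.record (Row.append lts ρ))) (hfs : HasTyFields Δ Γ fs lts)
    (hv : IsValue e) (hvs : FieldsValues fs) : ∃ e', Red (.modify e fs) e' := by
  obtain ⟨fs₀, rfl, hvs₀, hlabels⟩ := he.canonicalForm hv
  refine ⟨_, .recordMod hvs₀ hvs fun l hl => ?_⟩
  simp_all [hfs.labels_eq]

theorem HasTy.exists_red_extend {e : Tm} {fs : Fields} {lts : List (String × Ty)} {ρ : Ty}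
    {R : RowKind} (he : HasTy Δ Γ e (.record ρ)) (hρ : HasKind Δ ρ (.row R))
    (hR : R.Sub (.neg (lts.map Prod.fst).toFinset)) (hfs : HasTyFields Δ Γ fs lts)
    (hv : IsValue e) (hvs : FieldsValues fs) : ∃ e', Red (.extend e fs) e' := by
  obtain ⟨fs₀, rfl, hvs₀, hlabels⟩ := he.canonicalForm hv
  refine ⟨_, .recordExt hvs₀ hvs fun l hl hl₀ => ?_⟩
  have hnew : l ∈ (lts.map Prod.fst).toFinset := by simpa [hfs.labels_eq] using hl
  exact ((hρ.mem_of_mem_rowLabels (hlabels ▸ hl₀)).of_sub hR) hnew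

theorem HasTy.not_isValue_of_variant_rempty {e : Tm} (he : HasTy Δ Γ e (.variant .rempty)) :
    ¬ IsValue e := fun hv => by
  obtain ⟨_, _, _, _, hl⟩ := he.canonicalForm hv
  simp at hl

theorem HasTy.eq_record_nil_of_record_rempty {e : Tm} (he : HasTy Δ Γ e (.record .rempty))
    (hv : IsValue e) : e = .record .nil := by
  obtain ⟨fs, rfl, _, hlabels⟩ := he.canonicalForm hv
  rw [Fields.eq_nil_of_labels_eq_nil hlabels]

theorem HasTy.exists_red_matchVar {e : Tm} {ρ : Ty} (he : HasTy Δ Γ e (.variant ρ))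
    (hv : IsValue e) (l x₁ : String) (e₁ : Tm) (x₂ : String) (e₂ : Tm) :
    ∃ e', Red (.matchVar e l x₁ e₁ x₂ e₂) e' := by
  obtain ⟨l', w, rfl, hw, -⟩ := he.canonicalForm hv
  by_cases hl : l' = l
  · subst hl
    exact ⟨_, .matchMatch hw⟩
  · exact ⟨_, .matchSkip hw hl⟩

end Redexes

def CanStep (e : Tm) : Prop :=
  ∃ (E : Ctx) (e' e'' : Tm), e = E.fill e' ∧ Red e' e''

def Fields.CanStep (fs : Fields) : Prop :=
  ∃ (pre : Fields) (_ : FieldsValues pre) (l : String) (E : Ctx) (post : Fields) (e' e'' : Tm),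
    fs = pre.append (.cons l (E.fill e') post) ∧ Red e' e''

theorem CanStep.of_red {e : Tm} (h : ∃ e', Red e e') : CanStep e :=
  let ⟨e', hred⟩ := h
  ⟨.hole, e, e', rfl, hred⟩

theorem CanStep.map {e : Tm} (F : Tm → Tm) (K : Ctx → Ctx)
    (hK : ∀ E e, (K E).fill e = F (E.fill e))
    (h : CanStep e) : CanStep (F e) := by
  obtain ⟨E, e', e'', rfl, hred⟩ := h
  exact ⟨K E, e', e'', (hK E e').symm, hred⟩

theorem CanStep.of_fields {fs : Fields} (F : Fields → Tm)
    (K : (pre : Fields) → FieldsValues pre → String → Ctx → Fields → Ctx)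
    (hK : ∀ pre hpre l E post e,
      (K pre hpre l E post).fill e = F (pre.append (.cons l (E.fill e) post)))
    (h : fs.CanStep) : CanStep (F fs) := by
  obtain ⟨pre, hpre, l, E, post, e', e'', rfl, hred⟩ := h
  exact ⟨K pre hpre l E post, e', e'', (hK ..).symm, hred⟩

theorem CanStep.fields_cons {e : Tm} (l : String) (fs : Fields) (h : CanStep e) :
    (Fields.cons l e fs).CanStep := by
  obtain ⟨E, e', e'', rfl, hred⟩ := h
  exact ⟨.nil, .nil, l, E, fs, e', e'', rfl, hred⟩

theorem Fields.CanStep.cons {fs : Fields} {e : Tm} (l : String) (hv : IsValue e)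
    (h : fs.CanStep) : (Fields.cons l e fs).CanStep := by
  obtain ⟨pre, hpre, l', E, post, e', e'', rfl, hred⟩ := h
  exact ⟨.cons l e pre, .cons hv hpre, l', E, post, e', e'', rfl, hred⟩

theorem HasTy.isValue_or_canStep {Δ : KEnv} {Γ : TEnv} {e : Tm} {t : Ty}
    (h : HasTy Δ Γ e t) : Γ = [] → IsValue e ∨ CanStep e := by
  induction h using HasTy.rec
    (motive_2 := fun _ Γ fs _ _ => Γ = [] → FieldsValues fs ∨ fs.CanStep) with
  | var hx => rintro rfl; simp at hx
  | @app _ _ f a _ _ hf _ ihf iha =>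
    rintro rfl
    rcases ihf rfl with hvf | hsf
    · rcases iha rfl with hva | hsa
      · exact .inr (.of_red (hf.exists_red_app hvf hva))
      · exact .inr (hsa.map (.app f ·) (.appR f hvf ·) fun _ _ => rfl)
    · exact .inr (hsf.map (.app · a) (.appL · a) fun _ _ => rfl)
  | lam => exact fun _ => .inl .lam
  | @letE _ _ x _ e₂ _ _ _ _ _ _ _ ih₁ =>
    rintro rfl
    rcases ih₁ rfl with hv | hs
    · exact .inr (.of_red ⟨_, .letE hv⟩)
    · exact .inr (hs.map (.letE x · e₂) (.letE x · e₂) fun _ _ => rfl)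
  | fix => exact fun _ => .inl .fix
  | @label _ _ _ _ l _ _ _ _ _ ih =>
    rintro rfl
    rcases ih rfl with hv | hs
    · exact .inl (.label hv)
    · exact .inr (hs.map (.label l ·) (.label l ·) fun _ _ => rfl)
  | unroll _ ih => exact ih
  | roll _ ih => exact ih
  | recordCons _ ih =>
    rintro rfl
    rcases ih rfl with hvs | hss
    · exact .inl (.record hvs)
    · exact .inr (.of_fields .record .record (fun _ _ _ _ _ _ => rfl) hss)
  | @recordMod _ _ e fs _ _ he hfs ih ihs =>
    rintro rfl
    rcases ih rfl with hv | hs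
    · rcases ihs rfl with hvs | hss
      · exact .inr (.of_red (he.exists_red_modify hfs hv hvs))
      · exact .inr (.of_fields (.modify e) (.modifyR e hv) (fun _ _ _ _ _ _ => rfl) hss)
    · exact .inr (hs.map (.modify · fs) (.modifyL · fs) fun _ _ => rfl)
  | @recordExt _ _ e fs _ _ _ he hρ hR hfs ih ihs =>
    rintro rfl
    rcases ih rfl with hv | hs
    · rcases ihs rfl with hvs | hss
      · exact .inr (.of_red (he.exists_red_extend hρ hR hfs hv hvs))
      · exact .inr (.of_fields (.extend e) (.extendR e hv) (fun _ _ _ _ _ _ => rfl) hss)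
    · exact .inr (hs.map (.extend · fs) (.extendL · fs) fun _ _ => rfl)
  | @fieldAccess _ _ _ l _ _ he ih =>
    rintro rfl
    rcases ih rfl with hv | hs
    · exact .inr (.of_red (he.exists_red_proj hv))
    · exact .inr (hs.map (.proj · l) (.proj · l) fun _ _ => rfl)
  | @fieldDel _ _ _ l _ _ he ih =>
    rintro rfl
    rcases ih rfl with hv | hs
    · exact .inr (.of_red (he.exists_red_remove hv))
    · exact .inr (hs.map (.remove · l) (.remove · l) fun _ _ => rfl)
  | matchVoid he ih =>
    rintro rfl
    rcases ih rfl with hv | hs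
    · exact (he.not_isValue_of_variant_rempty hv).elim
    · exact .inr (hs.map .matchVoid .matchVoid fun _ _ => rfl)
  | @matchUnit _ _ _ e₁ _ he _ ih =>
    rintro rfl
    rcases ih rfl with hv | hs
    · rw [he.eq_record_nil_of_record_rempty hv]
      exact .inr (.of_red ⟨_, .matchUnit⟩)
    · exact .inr (hs.map (.matchUnit · e₁) (.matchUnit · e₁) fun _ _ => rfl)
  | @matchVar _ _ _ l x₁ e₁ x₂ e₂ _ _ _ _ _ _ he _ _ ih =>
    rintro rfl
    rcases ih rfl with hv | hs
    · exact .inr (.of_red (he.exists_red_matchVar hv l x₁ e₁ x₂ e₂))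
    · exact .inr (hs.map (.matchVar · l x₁ e₁ x₂ e₂) (.matchVar · l x₁ e₁ x₂ e₂)
        fun _ _ => rfl)
  | nil => exact .inl .nil
  | @cons _ _ l _ _ fs _ _ _ ih ihs hΓ =>
    rcases ih hΓ with hv | hs
    · rcases ihs hΓ with hvs | hss
      · exact .inl (.cons hv hvs)
      · exact .inr (hss.cons l hv)
    · exact .inr (hs.fields_cons l fs)

/-- **Progress**: if `Δ;· ⊢ e : t` then either `e` is a value, or there exist an
evaluation context `E` and terms `e'`, `e''` such that `e = E[e']` and `e' ⇝ e''`
(equivalently, `e` takes a contextual step). -/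
theorem progress (Δ : KEnv) (e : Tm) (t : Ty)
    (h : HasTy Δ [] e t) :
    IsValue e ∨ ∃ (E : Ctx) (e' e'' : Tm), e = E.fill e' ∧ Red e' e'' :=
  h.isValue_or_canStep rfl

end Elevate
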